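/- For every real q < 3, ∫_{−ln 2}^{∞} (e^{(q−2)y} − 1 − (q − 2)(e^y − 1)·1_{y < ln 2})·e^{y}/(e^y − 1)² dy = ∫_{−ln 2}^{∞} (e^{qy} − 1 − q(e^y − 1)·1_{y < ln 2})·e^{−y}/(e^y − 1)² dy + 2 + 2·ln 2 − q·(2·ln 2 + 3/2). -/

import Mathlib

/-!
With `t = e^y`, the two integrands differ by an elementary rational function of `t`: the terms
`t^(q-1)` cancel, leaving `tiltCorrection q`, which is affine in `1/t` below `log 2` and equal to
`1/t - 2/(t-1)` above it. Its integral is computed from explicit primitives. The right-hand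
integrand is integrable: near `y = 0` the numerator is `O((e^y - 1)^2)` by a second-order Taylor
bound, and at infinity it is `O(e^{-(3-q)y} + e^{-3y})`. The left-hand integral then splits as
the sum of the two.
-/

open MeasureTheory Set Real Filter Topology

theorem ContDiff.exists_abs_sub_sub_deriv_mul_le_sq {f : ℝ → ℝ} (hf : ContDiff ℝ 2 f)
    {a b x₀ : ℝ} (hx₀ : x₀ ∈ Icc a b) :
    ∃ C, ∀ x ∈ Icc a b, |f x - f x₀ - deriv f x₀ * (x - x₀)| ≤ C * (x - x₀) ^ 2 := by
  obtain ⟨hdf, -, hf'⟩ := (contDiff_succ_iff_deriv (n := 1)).1 hf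
  obtain ⟨C, hC⟩ := isCompact_Icc.exists_bound_of_continuousOn
    (hf'.continuous_deriv le_rfl).continuousOn (s := Icc a b)
  refine ⟨C, fun x hx => ?_⟩
  have hseg : uIcc x₀ x ⊆ Icc a b := uIcc_subset_Icc hx₀ hx
  have hderiv_lip : ∀ u ∈ uIcc x₀ x, ‖deriv f u - deriv f x₀‖ ≤ C * |x - x₀| := fun u hu =>
    calc ‖deriv f u - deriv f x₀‖ ≤ C * ‖u - x₀‖ :=
          (convex_Icc a b).norm_image_sub_le_of_norm_deriv_le
            (fun v _ => hf'.differentiable one_ne_zero v) hC hx₀ (hseg hu)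
      _ ≤ C * |x - x₀| :=
          mul_le_mul_of_nonneg_left (abs_sub_left_of_mem_uIcc hu) ((norm_nonneg _).trans (hC _ hx₀))
  have hmvt := (convex_uIcc x₀ x).norm_image_sub_le_of_norm_hasDerivWithin_le
    (f := fun u => f u - deriv f x₀ * u) (f' := fun u => deriv f u - deriv f x₀)
    (fun u _ => ((hdf u).hasDerivAt.sub ((hasDerivAt_id u).const_mul _)).hasDerivWithinAt
      |>.congr_deriv (by simp))
    hderiv_lip left_mem_uIcc right_mem_uIcc
  calc |f x - f x₀ - deriv f x₀ * (x - x₀)|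
        = ‖(f x - deriv f x₀ * x) - (f x₀ - deriv f x₀ * x₀)‖ := by rw [Real.norm_eq_abs]; ring_nf
    _ ≤ C * |x - x₀| * ‖x - x₀‖ := hmvt
    _ = C * (x - x₀) ^ 2 := by rw [Real.norm_eq_abs, mul_assoc, abs_mul_abs_self, sq]

theorem neg_log_two_lt_log_two : -log 2 < log 2 := by
  linarith [log_pos one_lt_two]

theorem abs_le_two_mul_abs_exp_sub_one {y : ℝ} (hy : -log 2 ≤ y) : |y| ≤ 2 * |exp y - 1| := by
  rcases le_or_gt 0 y with h | h
  · have := add_one_le_exp y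
    rw [abs_of_nonneg h, abs_of_nonneg (by linarith)]
    linarith
  · have hhalf : 1 / 2 ≤ exp y := by simpa [exp_neg, exp_log] using exp_le_exp.2 hy
    have hmul : (-y + 1) * exp y ≤ 1 := by
      simpa [← exp_add] using mul_le_mul_of_nonneg_right (add_one_le_exp (-y)) (exp_pos y).le
    rw [abs_of_neg h, abs_of_neg (by linarith [exp_lt_one_iff.2 h])]
    nlinarith

theorem exists_abs_exp_mul_sub_le_sq (r : ℝ) : ∃ K, 0 ≤ K ∧ ∀ y ∈ Icc (-log 2) (log 2),
    |exp (r * y) - 1 - r * (exp y - 1)| ≤ K * (exp y - 1) ^ 2 := by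
  set f : ℝ → ℝ := fun y => exp (r * y) - r * exp y
  have hf' : deriv f 0 = 0 := by
    have : HasDerivAt f (exp (r * 0) * (r * 1) - r * exp 0) 0 :=
      ((hasDerivAt_id 0).const_mul r).exp.sub ((hasDerivAt_exp 0).const_mul r)
    simpa using this.deriv
  obtain ⟨C, hC⟩ := ContDiff.exists_abs_sub_sub_deriv_mul_le_sq (f := f) (by fun_prop)
    (⟨by linarith [neg_log_two_lt_log_two], by linarith [log_pos one_lt_two]⟩ :
      (0 : ℝ) ∈ Icc (-log 2) (log 2))
  refine ⟨4 * |C|, by positivity, fun y hy => ?_⟩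
  have hy2 : y ^ 2 ≤ 4 * (exp y - 1) ^ 2 := by
    have := pow_le_pow_left₀ (abs_nonneg y) (abs_le_two_mul_abs_exp_sub_one hy.1) 2
    rw [sq_abs, mul_pow, sq_abs] at this
    linarith
  calc |exp (r * y) - 1 - r * (exp y - 1)| = |f y - f 0 - deriv f 0 * (y - 0)| := by
        simp [f, hf']; ring_nf
    _ ≤ C * (y - 0) ^ 2 := hC y hy
    _ ≤ |C| * (4 * (exp y - 1) ^ 2) := by
        rw [sub_zero]; exact mul_le_mul (le_abs_self C) hy2 (sq_nonneg y) (abs_nonneg C)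
    _ = 4 * |C| * (exp y - 1) ^ 2 := by ring

theorem exp_neg_div_exp_sub_one_sq_le {y : ℝ} (hy : log 2 ≤ y) :
    exp (-y) / (exp y - 1) ^ 2 ≤ 4 * exp (-(3 * y)) := by
  have h2 : 2 ≤ exp y := by simpa [exp_log] using exp_le_exp.2 hy
  rw [div_le_iff₀ (by nlinarith), show 3 * y = y + y + y by ring, exp_neg, exp_neg, exp_add,
    exp_add]
  field_simp
  nlinarith

-- At `y = 0` division by zero makes this `0`; only its values off a null set matter.
noncomputable def compensatedIntegrand (q y : ℝ) : ℝ :=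
  (exp (q * y) - 1 - q * (exp y - 1) * (if y < log 2 then 1 else 0)) * exp (-y) / (exp y - 1) ^ 2

theorem measurable_compensatedIntegrand (q : ℝ) : Measurable (compensatedIntegrand q) := by
  have : Measurable fun y : ℝ => if y < log 2 then (1 : ℝ) else 0 :=
    Measurable.ite measurableSet_Iio measurable_const measurable_const
  unfold compensatedIntegrand
  fun_prop

theorem integrableOn_Ioo_compensatedIntegrand (q : ℝ) :
    IntegrableOn (compensatedIntegrand q) (Ioo (-log 2) (log 2)) := by
  obtain ⟨K, hK, hbound⟩ := exists_abs_exp_mul_sub_le_sq q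
  refine Integrable.mono' (integrableOn_const (C := 2 * K) measure_Ioo_lt_top.ne)
    (measurable_compensatedIntegrand q).aestronglyMeasurable
    ((ae_restrict_iff' measurableSet_Ioo).2 (ae_of_all _ fun y hy => ?_))
  have hexp : exp (-y) ≤ 2 := by simpa [exp_log] using exp_le_exp.2 (neg_le.1 hy.1.le)
  rw [compensatedIntegrand, if_pos hy.2, mul_one, norm_div, norm_mul,
    norm_of_nonneg (exp_pos _).le, norm_of_nonneg (sq_nonneg _), Real.norm_eq_abs]
  refine div_le_of_le_mul₀ (sq_nonneg _) (by positivity) ?_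
  calc |exp (q * y) - 1 - q * (exp y - 1)| * exp (-y) ≤ K * (exp y - 1) ^ 2 * 2 :=
        mul_le_mul (hbound y (Ioo_subset_Icc_self hy)) hexp (exp_pos _).le (by positivity)
    _ = 2 * K * (exp y - 1) ^ 2 := by ring

theorem integrableOn_Ioi_compensatedIntegrand {q : ℝ} (hq : q < 3) :
    IntegrableOn (compensatedIntegrand q) (Ioi (log 2)) := by
  refine Integrable.mono'
    (((exp_neg_integrableOn_Ioi _ (by linarith : (0 : ℝ) < 3 - q)).const_mul 4).add
      ((exp_neg_integrableOn_Ioi _ (by norm_num : (0 : ℝ) < 3)).const_mul 4))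
    (measurable_compensatedIntegrand q).aestronglyMeasurable
    ((ae_restrict_iff' measurableSet_Ioi).2 (ae_of_all _ fun y hy => ?_))
  have hpos : 0 ≤ exp (-y) / (exp y - 1) ^ 2 := by positivity
  rw [compensatedIntegrand, if_neg (not_lt.2 hy.le), mul_zero, sub_zero, mul_div_assoc, norm_mul,
    norm_of_nonneg hpos, Real.norm_eq_abs]
  calc |exp (q * y) - 1| * (exp (-y) / (exp y - 1) ^ 2)
        ≤ (exp (q * y) + 1) * (4 * exp (-(3 * y))) := by
        refine mul_le_mul ?_ (exp_neg_div_exp_sub_one_sq_le hy.le) hpos (by positivity)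
        rw [abs_le]; constructor <;> linarith [exp_pos (q * y)]
    _ = 4 * exp (-(3 - q) * y) + 4 * exp (-3 * y) := by
        rw [add_mul, one_mul, mul_left_comm, ← exp_add]; ring_nf

theorem integrableOn_compensatedIntegrand {q : ℝ} (hq : q < 3) :
    IntegrableOn (compensatedIntegrand q) (Ioi (-log 2)) := by
  rw [← Ioo_union_Ici_eq_Ioi neg_log_two_lt_log_two]
  exact (integrableOn_Ioo_compensatedIntegrand q).union
    ((integrableOn_Ici_iff_integrableOn_Ioi).2 (integrableOn_Ioi_compensatedIntegrand hq))

noncomputable def tiltCorrection (q y : ℝ) : ℝ :=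
  if y < log 2 then 2 - q - (q - 1) * exp (-y) else exp (-y) - 2 / (exp y - 1)

theorem tiltCorrection_eqOn_Ioo (q : ℝ) :
    EqOn (tiltCorrection q) (fun y => 2 - q - (q - 1) * exp (-y)) (Ioo (-log 2) (log 2)) :=
  fun _ hy => if_pos hy.2

theorem tiltCorrection_eqOn_Ioi (q : ℝ) :
    EqOn (tiltCorrection q) (fun y => exp (-y) - 2 / (exp y - 1)) (Ioi (log 2)) :=
  fun _ hy => if_neg (not_lt.2 hy.le)

theorem hasDerivAt_tiltCorrection_tail_primitive {y : ℝ} (hy : 0 < y) :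
    HasDerivAt (fun y => -exp (-y) - 2 * log (1 - exp (-y))) (exp (-y) - 2 / (exp y - 1)) y := by
  have h1 : exp (-y) < 1 := exp_lt_one_iff.2 (by linarith)
  have hexp : HasDerivAt (fun y => exp (-y)) (-exp (-y)) y := by
    simpa using (hasDerivAt_neg y).exp
  refine (hexp.neg.sub (((hexp.const_sub 1).log (by linarith)).const_mul 2)).congr_deriv ?_
  have : exp y - 1 ≠ 0 := by linarith [one_lt_exp_iff.2 hy]
  rw [exp_neg]
  field_simp

theorem tendsto_tiltCorrection_tail_primitive :
    Tendsto (fun y => -exp (-y) - 2 * log (1 - exp (-y))) atTop (𝓝 0) := by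
  have h : Tendsto (fun y => exp (-y)) atTop (𝓝 0) := tendsto_exp_neg_atTop_nhds_zero
  have hlog : Tendsto (fun y => log (1 - exp (-y))) atTop (𝓝 0) := by
    simpa [Function.comp_def] using
      (continuousAt_log one_ne_zero).tendsto.comp (by simpa using h.const_sub 1)
  simpa using h.neg.sub (hlog.const_mul 2)

theorem exp_neg_sub_two_div_exp_sub_one_nonpos {y : ℝ} (hy : 0 < y) :
    exp (-y) - 2 / (exp y - 1) ≤ 0 := by
  have h : 1 < exp y := one_lt_exp_iff.2 hy
  rw [sub_nonpos, exp_neg, inv_eq_one_div, div_le_div_iff₀ (by linarith) (by linarith)]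
  linarith

theorem integrableOn_Ioo_tiltCorrection (q : ℝ) :
    IntegrableOn (tiltCorrection q) (Ioo (-log 2) (log 2)) :=
  ((Continuous.integrableOn_Icc (by fun_prop)).mono_set Ioo_subset_Icc_self).congr_fun
    (tiltCorrection_eqOn_Ioo q).symm measurableSet_Ioo

theorem integral_Ioo_tiltCorrection (q : ℝ) :
    ∫ y in Ioo (-log 2) (log 2), tiltCorrection q y = 2 * (2 - q) * log 2 - 3 / 2 * (q - 1) := by
  rw [setIntegral_congr_fun measurableSet_Ioo (tiltCorrection_eqOn_Ioo q),
    ← integral_Ioc_eq_integral_Ioo, ← intervalIntegral.integral_of_le neg_log_two_lt_log_two.le,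
    intervalIntegral.integral_sub intervalIntegrable_const
      ((by fun_prop : Continuous fun y => (q - 1) * exp (-y)).intervalIntegrable _ _),
    intervalIntegral.integral_const, intervalIntegral.integral_const_mul,
    intervalIntegral.integral_comp_neg (fun y => exp y), integral_exp, neg_neg, exp_neg,
    exp_log two_pos, smul_eq_mul]
  ring

theorem integrableOn_Ioi_tiltCorrection (q : ℝ) :
    IntegrableOn (tiltCorrection q) (Ioi (log 2)) :=
  (integrableOn_Ioi_deriv_of_nonpos'
    (fun _ hy => hasDerivAt_tiltCorrection_tail_primitive ((log_pos one_lt_two).trans_le hy))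
    (fun _ hy => exp_neg_sub_two_div_exp_sub_one_nonpos ((log_pos one_lt_two).trans hy))
    tendsto_tiltCorrection_tail_primitive).congr_fun
    (tiltCorrection_eqOn_Ioi q).symm measurableSet_Ioi

theorem integral_Ioi_tiltCorrection (q : ℝ) :
    ∫ y in Ioi (log 2), tiltCorrection q y = 1 / 2 - 2 * log 2 := by
  rw [setIntegral_congr_fun measurableSet_Ioi (tiltCorrection_eqOn_Ioi q),
    integral_Ioi_of_hasDerivAt_of_nonpos'
      (fun _ hy => hasDerivAt_tiltCorrection_tail_primitive ((log_pos one_lt_two).trans_le hy))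
      (fun _ hy => exp_neg_sub_two_div_exp_sub_one_nonpos ((log_pos one_lt_two).trans hy))
      tendsto_tiltCorrection_tail_primitive,
    exp_neg, exp_log two_pos, show (1 : ℝ) - 2⁻¹ = 2⁻¹ by norm_num, log_inv]
  ring

theorem integrableOn_tiltCorrection (q : ℝ) : IntegrableOn (tiltCorrection q) (Ioi (-log 2)) := by
  rw [← Ioo_union_Ici_eq_Ioi neg_log_two_lt_log_two]
  exact (integrableOn_Ioo_tiltCorrection q).union
    ((integrableOn_Ici_iff_integrableOn_Ioi).2 (integrableOn_Ioi_tiltCorrection q))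

theorem integral_tiltCorrection (q : ℝ) :
    ∫ y in Ioi (-log 2), tiltCorrection q y = 2 + 2 * log 2 - q * (2 * log 2 + 3 / 2) := by
  rw [← Ioo_union_Ici_eq_Ioi neg_log_two_lt_log_two,
    setIntegral_union ((Iio_disjoint_Ici le_rfl).mono_left Ioo_subset_Iio_self) measurableSet_Ici
      (integrableOn_Ioo_tiltCorrection q)
      ((integrableOn_Ici_iff_integrableOn_Ioi).2 (integrableOn_Ioi_tiltCorrection q)),
    integral_Ici_eq_integral_Ioi, integral_Ioo_tiltCorrection, integral_Ioi_tiltCorrection]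
  ring

theorem tilted_integrand_eq_add_tiltCorrection (q : ℝ) {y : ℝ} (hy : y ≠ 0) :
    (exp ((q - 2) * y) - 1 - (q - 2) * (exp y - 1) * (if y < log 2 then (1 : ℝ) else 0))
        * exp y / (exp y - 1) ^ 2 = compensatedIntegrand q y + tiltCorrection q y := by
  have hE : exp y - 1 ≠ 0 := sub_ne_zero.2 (by simpa using hy)
  have hq : exp ((q - 2) * y) = exp (q * y) * (exp y)⁻¹ ^ 2 := by
    rw [← exp_neg, ← exp_nat_mul, ← exp_add]; ring_nf
  rw [compensatedIntegrand, tiltCorrection, hq, exp_neg]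
  split_ifs <;> field_simp <;> ring

theorem stmt_11 (q : ℝ) (hq : q < 3) :
    (∫ y in Set.Ioi (-Real.log 2),
        (Real.exp ((q - 2) * y) - 1
            - (q - 2) * (Real.exp y - 1) * (if y < Real.log 2 then (1 : ℝ) else 0))
          * Real.exp y / (Real.exp y - 1) ^ 2)
      = (∫ y in Set.Ioi (-Real.log 2),
          (Real.exp (q * y) - 1
              - q * (Real.exp y - 1) * (if y < Real.log 2 then (1 : ℝ) else 0))
            * Real.exp (-y) / (Real.exp y - 1) ^ 2)
        + 2 + 2 * Real.log 2 - q * (2 * Real.log 2 + 3/2) := by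
  calc _ = ∫ y in Ioi (-log 2), (compensatedIntegrand q y + tiltCorrection q y) :=
        integral_congr_ae <| ae_restrict_of_ae <| (Measure.ae_ne volume 0).mono
          fun _ hy => tilted_integrand_eq_add_tiltCorrection q hy
    _ = (∫ y in Ioi (-log 2), compensatedIntegrand q y)
          + ∫ y in Ioi (-log 2), tiltCorrection q y :=
        integral_add (integrableOn_compensatedIntegrand hq) (integrableOn_tiltCorrection q)
    _ = _ := by rw [integral_tiltCorrection]; simp only [compensatedIntegrand]; ring
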